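/- Let H₁, H₂, H₃, H₄ be finite-dimensional complex inner product spaces and f : H₁ → H₂, g : H₂ → H₃, h : H₃ → H₄ conjugate-linear maps. Then (id_{H₁} ⊗ (P_g ⊗ id_{H₄}))(σ(Ψ_f ⊗ₜ Ψ_h)) = τ(Ψ_{h ∘ g ∘ f} ⊗ₜ Ψ_g), where h ∘ g ∘ f : H₁ → H₄ is conjugate-linear, σ : (H₁ ⊗ H₂) ⊗ (H₃ ⊗ H₄) ≃ H₁ ⊗ ((H₂ ⊗ H₃) ⊗ H₄) is the canonical reassociation sending (x₁ ⊗ x₂) ⊗ (x₃ ⊗ x₄) to x₁ ⊗ ((x₂ ⊗ x₃) ⊗ x₄), and τ : (H₁ ⊗ H₄) ⊗ (H₂ ⊗ H₃) ≃ H₁ ⊗ ((H₂ ⊗ H₃) ⊗ H₄) is the canonical reindexing sending (x₁ ⊗ x₄) ⊗ (x₂ ⊗ x₃) to x₁ ⊗ ((x₂ ⊗ x₃) ⊗ x₄). (Projecting the two middle factors of the pair of entangled states Ψ_f, Ψ_h onto Ψ_g leaves the outer pair of factors exactly in the state labeled by the composite h ∘ g ∘ f.) -/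

import Mathlib

open scoped TensorProduct ComplexConjugate ComplexInnerProductSpace

noncomputable section

lemma key_sum {H₃ H₄ : Type*} [NormedAddCommGroup H₃] [InnerProductSpace ℂ H₃]
    [NormedAddCommGroup H₄] [InnerProductSpace ℂ H₄]
    {ι : Type*} [Fintype ι] (b₃ : OrthonormalBasis ι ℂ H₃) (h : H₃ →ₗ⋆[ℂ] H₄) (x : H₃) :
    ∑ k, ⟪x, b₃ k⟫ • h (b₃ k) = h x := by
  conv_rhs => rw [← b₃.sum_repr' x, map_sum]
  refine Finset.sum_congr rfl fun k _ => ?_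
  rw [LinearMap.map_smulₛₗ]
  simp [inner_conj_symm]

/-- The state `Ψ_f = ∑ i, b i ⊗ₜ f (b i)` associated to a conjugate-linear map `f`
and an orthonormal basis `b`. -/
def PsiState {H₁ H₂ : Type*} [NormedAddCommGroup H₁] [InnerProductSpace ℂ H₁]
    [NormedAddCommGroup H₂] [InnerProductSpace ℂ H₂]
    {ι : Type*} [Fintype ι] (b : OrthonormalBasis ι ℂ H₁) (f : H₁ →ₗ⋆[ℂ] H₂) :
    H₁ ⊗[ℂ] H₂ := ∑ i, b i ⊗ₜ[ℂ] f (b i)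

/-- The functional `ε_g : H₁ ⊗ H₂ →ₗ[ℂ] ℂ`, `ε_g (φ ⊗ₜ ψ) = ⟪g φ, ψ⟫`, associated to a
conjugate-linear map `g`. -/
def epsFun {H₁ H₂ : Type*} [NormedAddCommGroup H₁] [InnerProductSpace ℂ H₁]
    [NormedAddCommGroup H₂] [InnerProductSpace ℂ H₂] (g : H₁ →ₗ⋆[ℂ] H₂) :
    H₁ ⊗[ℂ] H₂ →ₗ[ℂ] ℂ :=
  TensorProduct.lift <| LinearMap.mk₂ ℂ (fun φ ψ => ⟪g φ, ψ⟫)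
    (fun φ φ' ψ => by simp [inner_add_left])
    (fun c φ ψ => by simp [inner_smul_left]; ring)
    (fun φ ψ ψ' => by simp [inner_add_right])
    (fun c φ ψ => by simp [inner_smul_right])

/-- The (unnormalized) projector `P_g x = ε_g x • Ψ_g` onto the state `Ψ_g` of a
conjugate-linear map `g`. -/
def Pproj {H₁ H₂ : Type*} [NormedAddCommGroup H₁] [InnerProductSpace ℂ H₁]
    [NormedAddCommGroup H₂] [InnerProductSpace ℂ H₂]
    {ι : Type*} [Fintype ι] (b : OrthonormalBasis ι ℂ H₁) (g : H₁ →ₗ⋆[ℂ] H₂) :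
    H₁ ⊗[ℂ] H₂ →ₗ[ℂ] H₁ ⊗[ℂ] H₂ :=
  (epsFun g).smulRight (PsiState b g)

/-- the compositionality lemma
`(id ⊗ (P_g ⊗ id))(σ(Ψ_f ⊗ₜ Ψ_h)) = τ(Ψ_{h ∘ g ∘ f} ⊗ₜ Ψ_g)`. -/
theorem compositionality_lemma
    {H₁ H₂ H₃ H₄ : Type*}
    [NormedAddCommGroup H₁] [InnerProductSpace ℂ H₁] [FiniteDimensional ℂ H₁]
    [NormedAddCommGroup H₂] [InnerProductSpace ℂ H₂] [FiniteDimensional ℂ H₂]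
    [NormedAddCommGroup H₃] [InnerProductSpace ℂ H₃] [FiniteDimensional ℂ H₃]
    [NormedAddCommGroup H₄] [InnerProductSpace ℂ H₄] [FiniteDimensional ℂ H₄]
    {ι₁ ι₂ ι₃ : Type*} [Fintype ι₁] [Fintype ι₂] [Fintype ι₃]
    (b₁ : OrthonormalBasis ι₁ ℂ H₁) (b₂ : OrthonormalBasis ι₂ ℂ H₂)
    (b₃ : OrthonormalBasis ι₃ ℂ H₃)
    (f : H₁ →ₗ⋆[ℂ] H₂) (g : H₂ →ₗ⋆[ℂ] H₃) (h : H₃ →ₗ⋆[ℂ] H₄) :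
    -- `σ : (H₁ ⊗ H₂) ⊗ (H₃ ⊗ H₄) ≃ H₁ ⊗ ((H₂ ⊗ H₃) ⊗ H₄)`,
    -- `(x₁ ⊗ x₂) ⊗ (x₃ ⊗ x₄) ↦ x₁ ⊗ ((x₂ ⊗ x₃) ⊗ x₄)`
    letI σ : ((H₁ ⊗[ℂ] H₂) ⊗[ℂ] (H₃ ⊗[ℂ] H₄)) ≃ₗ[ℂ] H₁ ⊗[ℂ] ((H₂ ⊗[ℂ] H₃) ⊗[ℂ] H₄) :=
      (TensorProduct.assoc ℂ H₁ H₂ (H₃ ⊗[ℂ] H₄)).trans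
        (TensorProduct.congr (LinearEquiv.refl ℂ H₁) (TensorProduct.assoc ℂ H₂ H₃ H₄).symm)
    -- `τ : (H₁ ⊗ H₄) ⊗ (H₂ ⊗ H₃) ≃ H₁ ⊗ ((H₂ ⊗ H₃) ⊗ H₄)`,
    -- `(x₁ ⊗ x₄) ⊗ (x₂ ⊗ x₃) ↦ x₁ ⊗ ((x₂ ⊗ x₃) ⊗ x₄)`
    letI τ : ((H₁ ⊗[ℂ] H₄) ⊗[ℂ] (H₂ ⊗[ℂ] H₃)) ≃ₗ[ℂ] H₁ ⊗[ℂ] ((H₂ ⊗[ℂ] H₃) ⊗[ℂ] H₄) :=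
      (TensorProduct.assoc ℂ H₁ H₄ (H₂ ⊗[ℂ] H₃)).trans
        (TensorProduct.congr (LinearEquiv.refl ℂ H₁) (TensorProduct.comm ℂ H₄ (H₂ ⊗[ℂ] H₃)))
    TensorProduct.map (LinearMap.id (R := ℂ) (M := H₁))
        (TensorProduct.map (Pproj b₂ g) (LinearMap.id (R := ℂ) (M := H₄)))
        (σ (PsiState b₁ f ⊗ₜ[ℂ] PsiState b₃ h))
      = τ (PsiState b₁ (h.comp (g.comp f) : H₁ →ₗ⋆[ℂ] H₄) ⊗ₜ[ℂ] PsiState b₂ g) := by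
  have step : ∀ x : H₂, (∑ k, (Pproj b₂ g (x ⊗ₜ[ℂ] b₃ k)) ⊗ₜ[ℂ] h (b₃ k))
      = PsiState b₂ g ⊗ₜ[ℂ] h (g x) := by
    intro x
    rw [← key_sum b₃ h (g x), TensorProduct.tmul_sum]
    refine Finset.sum_congr rfl fun k _ => ?_
    rw [Pproj, LinearMap.smulRight_apply, TensorProduct.smul_tmul]
    congr 1
  have e1 : PsiState b₁ f = (∑ i, b₁ i ⊗ₜ[ℂ] f (b₁ i) : H₁ ⊗[ℂ] H₂) := rfl
  have e2 : PsiState b₃ h = (∑ k, b₃ k ⊗ₜ[ℂ] h (b₃ k) : H₃ ⊗[ℂ] H₄) := rfl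
  have e3 : PsiState b₁ (h.comp (g.comp f))
      = (∑ i, b₁ i ⊗ₜ[ℂ] h (g (f (b₁ i))) : H₁ ⊗[ℂ] H₄) := rfl
  rw [e1, e2, e3]
  simp only [TensorProduct.sum_tmul, TensorProduct.tmul_sum, map_sum, LinearEquiv.trans_apply,
    TensorProduct.assoc_tmul, TensorProduct.congr_tmul, LinearEquiv.refl_apply,
    TensorProduct.assoc_symm_tmul, TensorProduct.comm_tmul, TensorProduct.map_tmul,
    LinearMap.id_coe, id_eq]
  rw [Finset.sum_comm]
  refine Finset.sum_congr rfl fun i _ => ?_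
  rw [← TensorProduct.tmul_sum, step (f (b₁ i))]
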